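/- arXiv:1804.07832 — 3 statements merged into one kernel-verified Lean document; each statement's English description precedes it below -/
import Mathlib

section
/- Let D be a valid closed diagram and let D' be obtained from D by a single exchange (a right exchange D_{R,n} or left exchange D_{L,n} at an admissible height n). Then there exist bijections φ_F from the set of faces of D to the set of faces of D' and φ_C from the set of components of D to the set of components of D', and these bijections respect the neighbourhood relation: for every component c and face f of D, c ◊ f holds in D if and only if φ_C(c) ◊ φ_F(f) holds in D'. -/
/-- Combinatorial encoding of a planar string diagram. -/
structure Diagram where
  S : ℕ
  N : ℕ
  H : ℕ → ℕ
  I : ℕ → ℕ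
  O : ℕ → ℕ

namespace Diagram

/-- `D.Δ n = D.O n - D.I n`, as an integer. -/
def Δ (D : Diagram) (n : ℕ) : ℤ := (D.O n : ℤ) - (D.I n : ℤ)

/-- Number of wires at each level. -/
def W (D : Diagram) : ℕ → ℤ
  | 0 => (D.S : ℤ)
  | n + 1 => D.W n + D.Δ n

/-- A diagram is valid when there are enough edges above each vertex. -/
def Valid (D : Diagram) : Prop :=
  ∀ n < D.N, ((D.H n + D.I n : ℕ) : ℤ) ≤ D.W n

/-- `D` admits a right exchange move at height `n`. -/
def AdmitsRight (D : Diagram) (n : ℕ) : Prop :=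
  n + 1 < D.N ∧ D.H n + D.O n ≤ D.H (n + 1)

/-- `D` admits a left exchange move at height `n`. -/
def AdmitsLeft (D : Diagram) (n : ℕ) : Prop :=
  n + 1 < D.N ∧ D.H (n + 1) + D.I (n + 1) ≤ D.H n

/-- The right exchange `D_{R,n}`.  (Note `D.H (n+1) + D.I n - D.O n` is the
natural-number rendering of `D.H (n+1) - D.Δ n`, exact under admissibility.) -/
def rightExchange (D : Diagram) (n : ℕ) : Diagram where
  S := D.S
  N := D.N
  H := fun m =>
    if m = n then D.H (n + 1) + D.I n - D.O n
    else if m = n + 1 then D.H n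
    else D.H m
  I := fun m => if m = n then D.I (n + 1) else if m = n + 1 then D.I n else D.I m
  O := fun m => if m = n then D.O (n + 1) else if m = n + 1 then D.O n else D.O m

/-- The left exchange `D_{L,n}`. -/
def leftExchange (D : Diagram) (n : ℕ) : Diagram where
  S := D.S
  N := D.N
  H := fun m =>
    if m = n then D.H (n + 1)
    else if m = n + 1 then D.H n + D.O (n + 1) - D.I (n + 1)
    else D.H m
  I := fun m => if m = n then D.I (n + 1) else if m = n + 1 then D.I n else D.I m
  O := fun m => if m = n then D.O (n + 1) else if m = n + 1 then D.O n else D.O m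

/-- A closed diagram: no source and no target edges. -/
def Closed (D : Diagram) : Prop := D.S = 0 ∧ D.W D.N = 0

end Diagram

open Diagram

/-- One right exchange step. -/
def RightStep (D E : Diagram) : Prop := ∃ n, D.AdmitsRight n ∧ E = D.rightExchange n

/-- Reflexive-transitive closure of right exchange: `D →R* E`. -/
def RightRT : Diagram → Diagram → Prop := Relation.ReflTransGen RightStep

/-- A diagram admitting no right exchange move (a right normal form). -/
def IsRightNormal (D : Diagram) : Prop := ∀ n, ¬ D.AdmitsRight n

/-- `p = (h, k)` is an input position of vertex `v`. -/
def IsInput (D : Diagram) (v : ℕ) (p : ℕ × ℕ) : Prop :=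
  v < D.N ∧ p.1 = v ∧ D.H v ≤ p.2 ∧ p.2 < D.H v + D.I v

/-- `p = (h, k)` is an output position of vertex `v`. -/
def IsOutput (D : Diagram) (v : ℕ) (p : ℕ × ℕ) : Prop :=
  v < D.N ∧ p.1 = v + 1 ∧ D.H v ≤ p.2 ∧ p.2 < D.H v + D.O v

/-- The edge at position `p` persists to position `q` at the next level. -/
def Persist (D : Diagram) (p q : ℕ × ℕ) : Prop :=
  p.1 < D.N ∧ q.1 = p.1 + 1 ∧ ((p.2 : ℤ) < D.W p.1) ∧
    ((p.2 < D.H p.1 ∧ q.2 = p.2) ∨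
     (D.H p.1 + D.I p.1 ≤ p.2 ∧ ((q.2 : ℤ) = (p.2 : ℤ) + D.Δ p.1)))

/-- There is a maximal edge from an output of `u` to an input of `v`. -/
def EdgeFromTo (D : Diagram) (u v : ℕ) : Prop :=
  ∃ p q, IsOutput D u p ∧ Relation.ReflTransGen (Persist D) p q ∧ IsInput D v q

/-- Vertices `u` and `v` are adjacent: some maximal edge runs from one to the other. -/
def Adjacent (D : Diagram) (u v : ℕ) : Prop := EdgeFromTo D u v ∨ EdgeFromTo D v u

/-- A diagram is connected when any two vertices are joined by a path of adjacencies. -/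
def Connected (D : Diagram) : Prop :=
  ∀ u v, u < D.N → v < D.N → Relation.ReflTransGen (Adjacent D) u v

/-- Vertex `v` is incident to a maximal edge touching the top boundary (level 0). -/
def TouchesTop (D : Diagram) (v : ℕ) : Prop :=
  ∃ (k : ℕ) (q : ℕ × ℕ), ((k : ℤ) < D.W 0) ∧
    Relation.ReflTransGen (Persist D) (0, k) q ∧ IsInput D v q

/-- Vertex `v` is incident to a maximal edge touching the bottom boundary (level `D.N`). -/
def TouchesBottom (D : Diagram) (v : ℕ) : Prop :=
  ∃ p q, IsOutput D v p ∧ Relation.ReflTransGen (Persist D) p q ∧ q.1 = D.N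

/-- A diagram is boundary-connected if it is connected, or every vertex is joined by
a path of adjacencies to a vertex incident to a maximal edge touching a boundary. -/
def BoundaryConnected (D : Diagram) : Prop :=
  Connected D ∨
    ∀ u, u < D.N → ∃ v, (TouchesTop D v ∨ TouchesBottom D v) ∧
      Relation.ReflTransGen (Adjacent D) u v

/-- A right reduction `A →R* B` as an explicit finite sequence of right exchange steps. -/
structure Reduction (A B : Diagram) where
  len : ℕ
  seq : ℕ → Diagram
  steps : ℕ → ℕ
  src : seq 0 = A
  tgt : seq len = B
  ok : ∀ i < len, (seq i).AdmitsRight (steps i) ∧ seq (i + 1) = (seq i).rightExchange (steps i)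

/-- The action of an exchange at height `n` on the heights of vertices. -/
def swapAt (n h : ℕ) : ℕ := if h = n then n + 1 else if h = n + 1 then n else h

namespace Reduction

variable {A B : Diagram}

/-- Trajectory of the vertex starting at height `h0` along the reduction. -/
def traj (r : Reduction A B) (h0 : ℕ) : ℕ → ℕ
  | 0 => h0
  | t + 1 => swapAt (r.steps t) (r.traj h0 t)

/-- Step `t` of the reduction involves the vertex with initial height `h0`. -/
def Involves (r : Reduction A B) (h0 t : ℕ) : Prop :=
  t < r.len ∧ (r.traj h0 t = r.steps t ∨ r.traj h0 t = r.steps t + 1)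

/-- Step `t` of the reduction exchanges the vertices with initial heights `h0` and `h1`. -/
def ExchangeOf (r : Reduction A B) (h0 h1 t : ℕ) : Prop :=
  t < r.len ∧
    ((r.traj h0 t = r.steps t ∧ r.traj h1 t = r.steps t + 1) ∨
     (r.traj h1 t = r.steps t ∧ r.traj h0 t = r.steps t + 1))

/-- The configuration at step `t` is collapsible: the only vertices whose height lies
between the heights of the two final vertices are the final vertices themselves.
Here `π` numbers the vertices of `A` so that `A.N - 2` and `A.N - 1` are the finals. -/
def CollapsibleAt (r : Reduction A B) (π : ℕ → ℕ) (t : ℕ) : Prop :=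
  ∀ i, i < A.N →
    min (r.traj (π (A.N - 2)) t) (r.traj (π (A.N - 1)) t) ≤ r.traj (π i) t →
    r.traj (π i) t ≤ max (r.traj (π (A.N - 2)) t) (r.traj (π (A.N - 1)) t) →
    i = A.N - 2 ∨ i = A.N - 1

/-- The reduction is a funnel: each non-final vertex is exchanged at most once with a
final vertex, and an exchange of two non-final vertices forces both to be exchanged
with a final vertex during the reduction, with two different final vertices. -/
def IsFunnel (r : Reduction A B) (π : ℕ → ℕ) : Prop :=
  (∀ i, i < A.N - 2 → ∀ t t',
      (r.ExchangeOf (π i) (π (A.N - 2)) t ∨ r.ExchangeOf (π i) (π (A.N - 1)) t) →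
      (r.ExchangeOf (π i) (π (A.N - 2)) t' ∨ r.ExchangeOf (π i) (π (A.N - 1)) t') →
      t = t') ∧
  (∀ i j t, i < A.N - 2 → j < A.N - 2 → r.ExchangeOf (π i) (π j) t →
      ((∃ t1, r.ExchangeOf (π i) (π (A.N - 2)) t1) ∧
       (∃ t2, r.ExchangeOf (π j) (π (A.N - 1)) t2)) ∨
      ((∃ t1, r.ExchangeOf (π i) (π (A.N - 1)) t1) ∧
       (∃ t2, r.ExchangeOf (π j) (π (A.N - 2)) t2)))

/-- The reduction is collapsible: source and target are collapsible, and any exchange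
between a non-final vertex and a final vertex is immediately preceded or followed by
an exchange with the other final vertex. -/
def IsCollapsibleRed (r : Reduction A B) (π : ℕ → ℕ) : Prop :=
  r.CollapsibleAt π 0 ∧ r.CollapsibleAt π r.len ∧
  ∀ i t, i < A.N - 2 →
    (r.ExchangeOf (π i) (π (A.N - 2)) t →
      r.ExchangeOf (π i) (π (A.N - 1)) (t + 1) ∨
      (1 ≤ t ∧ r.ExchangeOf (π i) (π (A.N - 1)) (t - 1))) ∧
    (r.ExchangeOf (π i) (π (A.N - 1)) t →
      r.ExchangeOf (π i) (π (A.N - 2)) (t + 1) ∨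
      (1 ≤ t ∧ r.ExchangeOf (π i) (π (A.N - 2)) (t - 1)))

/-- Cost of a reduction at weight `w`: exchanges involving the last vertex (label
`A.N - 1`) cost `w`, all others cost `1`. -/
def cost (r : Reduction A B) (π : ℕ → ℕ) (w : ℕ) : ℕ :=
  ∑ t ∈ Finset.range r.len,
    if r.traj (π (A.N - 1)) t = r.steps t ∨ r.traj (π (A.N - 1)) t = r.steps t + 1
    then w else 1

end Reduction

/-- The maximal edge starting at output position `p` of `u` ends at an input of `v`. -/
def EdgeStartsAt (D : Diagram) (u v : ℕ) (p : ℕ × ℕ) : Prop :=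
  IsOutput D u p ∧ ∃ q, Relation.ReflTransGen (Persist D) p q ∧ IsInput D v q

/-- `π` numbers the vertices of a linear diagram `D`: it is a bijection from labels
`0, …, D.N - 1` to heights, consecutive labels (and only those) are adjacent, with
exactly one edge between consecutive vertices; labels `0` and `D.N - 1` are the leaves. -/
def IsLinear (D : Diagram) (π : ℕ → ℕ) : Prop :=
  2 ≤ D.N ∧
  Set.BijOn π (Set.Iio D.N) (Set.Iio D.N) ∧
  (∀ i j, i < D.N → j < D.N → (Adjacent D (π i) (π j) ↔ (i + 1 = j ∨ j + 1 = i))) ∧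
  (∀ i, i + 1 < D.N →
    ∃! p : ℕ × ℕ, EdgeStartsAt D (π i) (π (i + 1)) p ∨ EdgeStartsAt D (π (i + 1)) (π i) p)

/-! ### Spots, places, faces and components (for closed diagrams) -/

/-- A spot `s_{h,k}`: the gap between the `k`-th and `(k+1)`-th edge at level `h`. -/
def ValidSpot (D : Diagram) (p : ℕ × ℕ) : Prop :=
  p.1 ≤ D.N ∧ ((p.2 : ℤ) ≤ D.W p.1)

def Spot (D : Diagram) := { p : ℕ × ℕ // ValidSpot D p }

/-- Adjacency of spots at consecutive levels. -/
def SpotAdj (D : Diagram) (s t : Spot D) : Prop :=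
  t.1.1 = s.1.1 + 1 ∧ s.1.1 < D.N ∧
    ((t.1.2 = s.1.2 ∧ s.1.2 ≤ D.H s.1.1) ∨
     ((t.1.2 : ℤ) = (s.1.2 : ℤ) + D.Δ s.1.1 ∧ D.H s.1.1 + D.I s.1.1 ≤ s.1.2))

/-- Faces are equivalence classes of spots under adjacency. -/
def faceSetoid (D : Diagram) : Setoid (Spot D) := Relation.EqvGen.setoid (SpotAdj D)

def Face (D : Diagram) := Quotient (faceSetoid D)

/-- Places: either the `k`-th edge crossing level `h` (with `1 ≤ k ≤ D.W h`),
encoded `Sum.inl (h, k)`, or the vertex `v_h`, encoded `Sum.inr h`. -/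
def ValidPlace (D : Diagram) : (ℕ × ℕ) ⊕ ℕ → Prop
  | Sum.inl (h, k) => h ≤ D.N ∧ 1 ≤ k ∧ ((k : ℤ) ≤ D.W h)
  | Sum.inr v => v < D.N

def Place (D : Diagram) := { p : (ℕ × ℕ) ⊕ ℕ // ValidPlace D p }

/-- Adjacency of places: places on the same edge at consecutive levels are adjacent,
and a place at an input or output position of a vertex is adjacent to that vertex. -/
def PlaceAdjRaw (D : Diagram) : (ℕ × ℕ) ⊕ ℕ → (ℕ × ℕ) ⊕ ℕ → Prop
  | Sum.inl (h, k), Sum.inl (h', k') =>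
      h' = h + 1 ∧ h < D.N ∧
        ((k' = k ∧ k ≤ D.H h) ∨
         ((k' : ℤ) = (k : ℤ) + D.Δ h ∧ D.H h + D.I h + 1 ≤ k))
  | Sum.inl (h, k), Sum.inr v =>
      (h = v ∧ D.H v + 1 ≤ k ∧ k ≤ D.H v + D.I v) ∨
      (h = v + 1 ∧ D.H v + 1 ≤ k ∧ k ≤ D.H v + D.O v)
  | Sum.inr v, Sum.inl (h, k) =>
      (h = v ∧ D.H v + 1 ≤ k ∧ k ≤ D.H v + D.I v) ∨
      (h = v + 1 ∧ D.H v + 1 ≤ k ∧ k ≤ D.H v + D.O v)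
  | Sum.inr _, Sum.inr _ => False

def PlaceAdj (D : Diagram) (p q : Place D) : Prop := PlaceAdjRaw D p.1 q.1

/-- Components are equivalence classes of places under adjacency. -/
def compSetoid (D : Diagram) : Setoid (Place D) := Relation.EqvGen.setoid (PlaceAdj D)

def Comp (D : Diagram) := Quotient (compSetoid D)

/-- A place and a spot at the same level are neighbours when the place is immediately
to the left or to the right of the spot. -/
def NbrPS (D : Diagram) (p : Place D) (s : Spot D) : Prop :=
  ∃ h k k', p.1 = Sum.inl (h, k') ∧ s.1 = (h, k) ∧ (k' = k ∨ k' = k + 1)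

/-- A component neighbours a face (`c ◊ f`). -/
def NbrCF (D : Diagram) (c : Comp D) (f : Face D) : Prop :=
  ∃ (p : Place D) (s : Spot D),
    Quotient.mk (compSetoid D) p = c ∧ Quotient.mk (faceSetoid D) s = f ∧ NbrPS D p s

/-- A boundary spot: `s_{h,0}` or `s_{h,D.W h}`. -/
def IsBoundarySpot (D : Diagram) (s : Spot D) : Prop :=
  s.1.2 = 0 ∨ (s.1.2 : ℤ) = D.W s.1.1

/-- The face of the boundary spot `s_{0,0}`. -/
def rootFace (D : Diagram) : Face D :=
  Quotient.mk (faceSetoid D) ⟨(0, 0), Nat.zero_le _, by simp [Diagram.W]⟩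

/-- The injection `I^D_s(E)` of a closed diagram `E` at the spot `s = s_{a,k}` of `D`. -/
def inject (D : Diagram) (a k : ℕ) (E : Diagram) : Diagram where
  S := D.S
  N := D.N + E.N
  H := fun h => if h < a then D.H h else if h < a + E.N then E.H (h - a) + k else D.H (h - E.N)
  I := fun h => if h < a then D.I h else if h < a + E.N then E.I (h - a) else D.I (h - E.N)
  O := fun h => if h < a then D.O h else if h < a + E.N then E.O (h - a) else D.O (h - E.N)


/-!
An exchange at height `n` changes a diagram only at level `n + 1`, between the two exchanged
vertices. Every spot and every edge at that level can be pushed, inside its face or component,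
to level `n` or `n + 2`, where the diagram and its exchange coincide; vertices are matched by the
transposition of `n` and `n + 1`. Pushing in both diagrams gives mutually inverse maps on faces
and on components, and a case analysis on positions relative to the two vertices shows that
adjacency in one diagram becomes connectivity in the other. An edge and a neighbouring spot at
level `n + 1` can be pushed in the same direction, so the maps preserve `◊`. Right and left
exchanges at `n` undo each other, so the same two pushes serve both cases.
-/

theorem Relation.EqvGen.apply_eq {α β : Type*} {r : α → α → Prop} {f : α → β}
    {a b : α} (h : Relation.EqvGen r a b)
    (hf : ∀ a b, r a b → f a = f b) : f a = f b :=
  Setoid.eqvGen_le (s := Setoid.ker f) hf h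

namespace Diagram

variable {X Y : Diagram} {n m h j k k' l v : ℕ}

lemma W_succ (X : Diagram) (m : ℕ) : X.W (m + 1) = X.W m + X.O m - X.I m := by
  show X.W m + X.Δ m = _
  rw [Δ]; ring

lemma Valid.le_W (hX : X.Valid) (hm : m < X.N) : (X.H m : ℤ) + X.I m ≤ X.W m :=
  mod_cast hX m hm

lemma Valid.bounds (hX : X.Valid) (hn : n + 1 < X.N) :
    (X.H n : ℤ) + X.I n ≤ X.W n ∧ (X.H (n + 1) : ℤ) + X.I (n + 1) ≤ X.W (n + 1) ∧
      X.W (n + 1) = X.W n + X.O n - X.I n ∧ X.W (n + 2) = X.W (n + 1) + X.O (n + 1) - X.I (n + 1) :=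
  ⟨hX.le_W (by omega), hX.le_W hn, X.W_succ n, X.W_succ (n + 1)⟩

@[simp] lemma swapAt_self : swapAt n n = n + 1 := by simp [swapAt]

@[simp] lemma swapAt_succ : swapAt n (n + 1) = n := by simp [swapAt]

lemma swapAt_of_ne (h₁ : m ≠ n) (h₂ : m ≠ n + 1) : swapAt n m = m := by simp [swapAt, h₁, h₂]

@[simp] lemma swapAt_swapAt : swapAt n (swapAt n m) = m := by unfold swapAt; split_ifs <;> omega

lemma swapAt_lt_iff {N : ℕ} (hn : n + 1 < N) : swapAt n m < N ↔ m < N := by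
  unfold swapAt; split_ifs <;> omega

lemma W_eq_of_Δ_swapAt (hS : Y.S = X.S) (hΔ : ∀ m, Y.Δ m = X.Δ (swapAt n m)) (m : ℕ) :
    Y.W m = if m = n + 1 then X.W n + X.Δ (n + 1) else X.W m := by
  induction m with
  | zero => simp [W, hS]
  | succ m ih =>
    show Y.W m + Y.Δ m = _
    rw [ih, hΔ]
    by_cases h₁ : m = n
    · subst h₁; simp
    by_cases h₂ : m = n + 1
    · subst h₂; simp [W]; ring
    simp [h₁, h₂, swapAt_of_ne h₁ h₂]; rfl

@[simp] lemma N_rightExchange : (X.rightExchange n).N = X.N := rfl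

@[simp] lemma I_rightExchange : (X.rightExchange n).I m = X.I (swapAt n m) := by
  unfold rightExchange swapAt; split_ifs <;> simp_all

@[simp] lemma O_rightExchange : (X.rightExchange n).O m = X.O (swapAt n m) := by
  unfold rightExchange swapAt; split_ifs <;> simp_all

@[simp] lemma H_rightExchange_succ : (X.rightExchange n).H (n + 1) = X.H n := by
  simp [rightExchange]

@[simp] lemma H_rightExchange_of_ne (h₁ : m ≠ n) (h₂ : m ≠ n + 1) :
    (X.rightExchange n).H m = X.H m := by
  simp [rightExchange, h₁, h₂]

-- Stated additively: the height in `rightExchange` is a truncated difference.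
lemma AdmitsRight.H_rightExchange_add (hA : X.AdmitsRight n) :
    (X.rightExchange n).H n + X.O n = X.H (n + 1) + X.I n := by
  have := hA.2; simp [rightExchange]; omega

@[simp] lemma N_leftExchange : (X.leftExchange n).N = X.N := rfl

@[simp] lemma I_leftExchange : (X.leftExchange n).I m = X.I (swapAt n m) := by
  unfold leftExchange swapAt; split_ifs <;> simp_all

@[simp] lemma O_leftExchange : (X.leftExchange n).O m = X.O (swapAt n m) := by
  unfold leftExchange swapAt; split_ifs <;> simp_all

@[simp] lemma H_leftExchange_self : (X.leftExchange n).H n = X.H (n + 1) := by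
  simp [leftExchange]

@[simp] lemma H_leftExchange_of_ne (h₁ : m ≠ n) (h₂ : m ≠ n + 1) :
    (X.leftExchange n).H m = X.H m := by
  simp [leftExchange, h₁, h₂]

lemma AdmitsLeft.H_leftExchange_add (hA : X.AdmitsLeft n) :
    (X.leftExchange n).H (n + 1) + X.I (n + 1) = X.H n + X.O (n + 1) := by
  have := hA.2; simp [leftExchange]; omega

@[simp] lemma W_rightExchange :
    (X.rightExchange n).W m = if m = n + 1 then X.W n + X.O (n + 1) - X.I (n + 1) else X.W m := by
  rw [W_eq_of_Δ_swapAt (X := X) (Y := X.rightExchange n) (n := n) rfl (fun _ => by simp [Δ]) m,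
    Δ, add_sub_assoc]

@[simp] lemma W_leftExchange :
    (X.leftExchange n).W m = if m = n + 1 then X.W n + X.O (n + 1) - X.I (n + 1) else X.W m := by
  rw [W_eq_of_Δ_swapAt (X := X) (Y := X.leftExchange n) (n := n) rfl (fun _ => by simp [Δ]) m,
    Δ, add_sub_assoc]

lemma AdmitsRight.admitsLeft_rightExchange (hA : X.AdmitsRight n) :
    (X.rightExchange n).AdmitsLeft n := by
  have := hA.2
  have := hA.H_rightExchange_add
  exact ⟨hA.1, by simp; omega⟩

lemma AdmitsLeft.admitsRight_leftExchange (hA : X.AdmitsLeft n) :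
    (X.leftExchange n).AdmitsRight n := by
  have := hA.2
  have := hA.H_leftExchange_add
  exact ⟨hA.1, by simp; omega⟩

lemma AdmitsRight.leftExchange_rightExchange (hA : X.AdmitsRight n) :
    (X.rightExchange n).leftExchange n = X := by
  obtain ⟨hN, hH⟩ := hA
  cases X
  simp only [leftExchange, rightExchange, mk.injEq, true_and]
  refine ⟨funext fun m => ?_, funext fun m => ?_, funext fun m => ?_⟩ <;> split_ifs <;> simp_all
  omega

lemma AdmitsLeft.rightExchange_leftExchange (hA : X.AdmitsLeft n) :
    (X.leftExchange n).rightExchange n = X := by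
  obtain ⟨hN, hH⟩ := hA
  cases X
  simp only [leftExchange, rightExchange, mk.injEq, true_and]
  refine ⟨funext fun m => ?_, funext fun m => ?_, funext fun m => ?_⟩ <;> split_ifs <;> simp_all
  omega

lemma Valid.rightExchange (hX : X.Valid) (hA : X.AdmitsRight n) : (X.rightExchange n).Valid := by
  obtain ⟨b₀, b₁, w₁, -⟩ := hX.bounds hA.1
  have := hA.H_rightExchange_add
  have := hA.2
  intro m hm
  push_cast
  simp only [N_rightExchange] at hm
  by_cases hm₀ : m = n
  · subst hm₀; simp; omega
  by_cases hm₁ : m = n + 1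
  · subst hm₁; simp; omega
  simpa [hm₀, hm₁, swapAt_of_ne hm₀ hm₁] using hX.le_W hm

lemma Valid.leftExchange (hX : X.Valid) (hA : X.AdmitsLeft n) : (X.leftExchange n).Valid := by
  obtain ⟨b₀, b₁, w₁, -⟩ := hX.bounds hA.1
  have := hA.H_leftExchange_add
  have := hA.2
  intro m hm
  push_cast
  simp only [N_leftExchange] at hm
  by_cases hm₀ : m = n
  · subst hm₀; simp; omega
  by_cases hm₁ : m = n + 1
  · subst hm₁; simp; omega
  simpa [hm₀, hm₁, swapAt_of_ne hm₀ hm₁] using hX.le_W hm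

def SameFace (X : Diagram) (s t : ℕ × ℕ) : Prop :=
  ∃ (hs : ValidSpot X s) (ht : ValidSpot X t),
    Quotient.mk (faceSetoid X) ⟨s, hs⟩ = Quotient.mk (faceSetoid X) ⟨t, ht⟩

def SameComp (X : Diagram) (x y : (ℕ × ℕ) ⊕ ℕ) : Prop :=
  ∃ (hx : ValidPlace X x) (hy : ValidPlace X y),
    Quotient.mk (compSetoid X) ⟨x, hx⟩ = Quotient.mk (compSetoid X) ⟨y, hy⟩

lemma SameFace.symm {s t : ℕ × ℕ} (h : SameFace X s t) : SameFace X t s :=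
  let ⟨hs, ht, e⟩ := h; ⟨ht, hs, e.symm⟩

lemma SameFace.trans {s t u : ℕ × ℕ} (h₁ : SameFace X s t) (h₂ : SameFace X t u) :
    SameFace X s u :=
  let ⟨hs, _, e₁⟩ := h₁; let ⟨_, hu, e₂⟩ := h₂; ⟨hs, hu, e₁.trans e₂⟩

lemma sameFace_refl {s : ℕ × ℕ} (hs : ValidSpot X s) : SameFace X s s := ⟨hs, hs, rfl⟩

lemma sameFace_of_spotAdj {s t : Spot X} (hst : SpotAdj X s t) : SameFace X s.1 t.1 :=
  ⟨s.2, t.2, Quotient.sound (Relation.EqvGen.rel _ _ hst)⟩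

lemma SameComp.symm {x y : (ℕ × ℕ) ⊕ ℕ} (h : SameComp X x y) : SameComp X y x :=
  let ⟨hx, hy, e⟩ := h; ⟨hy, hx, e.symm⟩

lemma SameComp.trans {x y z : (ℕ × ℕ) ⊕ ℕ} (h₁ : SameComp X x y) (h₂ : SameComp X y z) :
    SameComp X x z :=
  let ⟨hx, _, e₁⟩ := h₁; let ⟨_, hz, e₂⟩ := h₂; ⟨hx, hz, e₁.trans e₂⟩

lemma sameComp_refl {x : (ℕ × ℕ) ⊕ ℕ} (hx : ValidPlace X x) : SameComp X x x := ⟨hx, hx, rfl⟩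

lemma sameComp_of_placeAdj {x y : Place X} (hxy : PlaceAdj X x y) : SameComp X x.1 y.1 :=
  ⟨x.2, y.2, Quotient.sound (Relation.EqvGen.rel _ _ hxy)⟩

lemma sameFace_straight (hX : X.Valid) (hh : h < X.N) (hk : k ≤ X.H h) :
    SameFace X (h, k) (h + 1, k) := by
  have := hX.le_W hh
  have := X.W_succ h
  exact sameFace_of_spotAdj (s := ⟨(h, k), hh.le, by simp; omega⟩)
    (t := ⟨(h + 1, k), hh, by simp; omega⟩) ⟨rfl, hh, Or.inl ⟨rfl, hk⟩⟩

lemma sameFace_shift (hh : h < X.N) (hk : X.H h + X.I h ≤ k)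
    (hW : (k : ℤ) ≤ X.W h) (hk' : (k' : ℤ) = k + X.O h - X.I h) :
    SameFace X (h, k) (h + 1, k') := by
  have := X.W_succ h
  exact sameFace_of_spotAdj (s := ⟨(h, k), hh.le, hW⟩) (t := ⟨(h + 1, k'), hh, by simp; omega⟩)
    ⟨rfl, hh, Or.inr ⟨by simp [Δ]; omega, hk⟩⟩

lemma sameComp_straight (hX : X.Valid) (hh : h < X.N) (hk₁ : 1 ≤ k) (hk : k ≤ X.H h) :
    SameComp X (.inl (h, k)) (.inl (h + 1, k)) := by
  have := hX.le_W hh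
  have := X.W_succ h
  exact sameComp_of_placeAdj (x := ⟨.inl (h, k), hh.le, hk₁, by omega⟩)
    (y := ⟨.inl (h + 1, k), hh, hk₁, by omega⟩) ⟨rfl, hh, Or.inl ⟨rfl, hk⟩⟩

lemma sameComp_shift (hX : X.Valid) (hh : h < X.N) (hk : X.H h + X.I h < k)
    (hW : (k : ℤ) ≤ X.W h) (hk' : (k' : ℤ) = k + X.O h - X.I h) :
    SameComp X (.inl (h, k)) (.inl (h + 1, k')) := by
  have := hX.le_W hh
  have := X.W_succ h
  exact sameComp_of_placeAdj (x := ⟨.inl (h, k), hh.le, by omega, hW⟩)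
    (y := ⟨.inl (h + 1, k'), hh, by omega, by omega⟩)
    ⟨rfl, hh, Or.inr ⟨by simp [Δ]; omega, by omega⟩⟩

lemma sameComp_input (hX : X.Valid) (hv : v < X.N) (hk : X.H v < k) (hk' : k ≤ X.H v + X.I v) :
    SameComp X (.inl (v, k)) (.inr v) := by
  have := hX.le_W hv
  exact sameComp_of_placeAdj (x := ⟨.inl (v, k), hv.le, by omega, by omega⟩) (y := ⟨.inr v, hv⟩)
    (Or.inl ⟨rfl, hk, hk'⟩)

lemma sameComp_output (hX : X.Valid) (hv : v < X.N) (hk : X.H v < k) (hk' : k ≤ X.H v + X.O v) :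
    SameComp X (.inl (v + 1, k)) (.inr v) := by
  have := hX.le_W hv
  have := X.W_succ v
  exact sameComp_of_placeAdj (x := ⟨.inl (v + 1, k), hv, by omega, by omega⟩) (y := ⟨.inr v, hv⟩)
    (Or.inr ⟨rfl, hk, hk'⟩)

lemma SameFace.mk_eq {s t : ℕ × ℕ} (h : SameFace X s t) (hs : ValidSpot X s) (ht : ValidSpot X t) :
    Quotient.mk (faceSetoid X) ⟨s, hs⟩ = Quotient.mk (faceSetoid X) ⟨t, ht⟩ :=
  h.2.2

lemma SameComp.mk_eq {x y : (ℕ × ℕ) ⊕ ℕ} (h : SameComp X x y) (hx : ValidPlace X x)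
    (hy : ValidPlace X y) :
    Quotient.mk (compSetoid X) ⟨x, hx⟩ = Quotient.mk (compSetoid X) ⟨y, hy⟩ :=
  h.2.2

section Push

variable {p q : ℕ × ℕ → ℕ × ℕ}

/-- `p` pushes spots and edges of `X` off level `n + 1`, away from which `X` and `Y` agree. -/
structure IsPush (X Y : Diagram) (n : ℕ) (p : ℕ × ℕ → ℕ × ℕ) : Prop where
  N_eq : Y.N = X.N
  succ_lt : n + 1 < X.N
  W_eq : ∀ h, h ≠ n + 1 → Y.W h = X.W h
  eq_self : ∀ s : ℕ × ℕ, s.1 ≠ n + 1 → p s = s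
  fst_ne : ∀ s, (p s).1 ≠ n + 1
  sameFace : ∀ s, ValidSpot X s → SameFace X s (p s)
  sameComp : ∀ e, ValidPlace X (.inl e) → SameComp X (.inl e) (.inl (p e))
  sameFace_of_adj : ∀ s t : Spot X, SpotAdj X s t → SameFace Y (p s.1) (p t.1)
  sameComp_of_adj : ∀ x y : Place X, PlaceAdj X x y →
    SameComp Y (Sum.map p (swapAt n) x.1) (Sum.map p (swapAt n) y.1)
  nbr_off : ∀ h k k', ValidPlace X (.inl (h, k')) → ValidSpot X (h, k) → (k' = k ∨ k' = k + 1) →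
    ∃ h₀ j j', h₀ ≠ n + 1 ∧ (j' = j ∨ j' = j + 1) ∧
      SameComp X (.inl (h, k')) (.inl (h₀, j')) ∧ SameFace X (h, k) (h₀, j)

namespace IsPush

variable (hp : IsPush X Y n p) (hq : IsPush Y X n q)
include hp

lemma validSpot_iff {s : ℕ × ℕ} (hs : s.1 ≠ n + 1) : ValidSpot Y s ↔ ValidSpot X s := by
  simp only [ValidSpot, hp.N_eq, hp.W_eq _ hs]

lemma validPlace_iff {h k : ℕ} (hh : h ≠ n + 1) :
    ValidPlace Y (.inl (h, k)) ↔ ValidPlace X (.inl (h, k)) := by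
  simp only [ValidPlace, hp.N_eq, hp.W_eq _ hh]

lemma validSpot_map {s : ℕ × ℕ} (hs : ValidSpot X s) : ValidSpot Y (p s) :=
  (hp.validSpot_iff (hp.fst_ne s)).2 (hp.sameFace s hs).2.1

lemma validPlace_map {x : (ℕ × ℕ) ⊕ ℕ} (hx : ValidPlace X x) :
    ValidPlace Y (Sum.map p (swapAt n) x) := by
  rcases x with e | v
  · exact (hp.validPlace_iff (hp.fst_ne e)).2 (hp.sameComp e hx).2.1
  · exact (swapAt_lt_iff (hp.N_eq ▸ hp.succ_lt)).2 (hp.N_eq ▸ hx)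

def faceMap : Face X → Face Y :=
  Quotient.lift (fun s => Quotient.mk (faceSetoid Y) ⟨p s.1, hp.validSpot_map s.2⟩)
    fun _ _ h => h.apply_eq fun s t hst => (hp.sameFace_of_adj s t hst).mk_eq
      (hp.validSpot_map s.2) (hp.validSpot_map t.2)

def compMap : Comp X → Comp Y :=
  Quotient.lift
    (fun x => Quotient.mk (compSetoid Y) ⟨Sum.map p (swapAt n) x.1, hp.validPlace_map x.2⟩)
    fun _ _ h => h.apply_eq fun x y hxy => (hp.sameComp_of_adj x y hxy).mk_eq
      (hp.validPlace_map x.2) (hp.validPlace_map y.2)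

lemma faceMap_mk_of_ne {s : ℕ × ℕ} (hs : ValidSpot X s) (hne : s.1 ≠ n + 1) :
    hp.faceMap (Quotient.mk _ ⟨s, hs⟩) = Quotient.mk _ ⟨s, (hp.validSpot_iff hne).2 hs⟩ :=
  congrArg _ (Subtype.ext (hp.eq_self s hne))

lemma compMap_mk_of_ne {h k : ℕ} (hx : ValidPlace X (.inl (h, k))) (hne : h ≠ n + 1) :
    hp.compMap (Quotient.mk _ ⟨.inl (h, k), hx⟩) =
      Quotient.mk _ ⟨.inl (h, k), (hp.validPlace_iff hne).2 hx⟩ :=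
  congrArg _ (Subtype.ext (congrArg Sum.inl (hp.eq_self (h, k) hne)))

include hq in
lemma faceMap_faceMap (f : Face X) : hq.faceMap (hp.faceMap f) = f := by
  induction f using Quotient.ind with
  | _ s =>
    have hs : SameFace X (q (p s.1)) s.1 := by
      rw [hq.eq_self _ (hp.fst_ne s.1)]; exact (hp.sameFace s.1 s.2).symm
    exact hs.mk_eq _ _

include hq in
lemma compMap_compMap (c : Comp X) : hq.compMap (hp.compMap c) = c := by
  induction c using Quotient.ind with
  | _ x =>
    obtain ⟨e | v, hx⟩ := x
    · have he : SameComp X (.inl (q (p e))) (.inl e) := by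
        rw [hq.eq_self _ (hp.fst_ne e)]; exact (hp.sameComp e hx).symm
      exact he.mk_eq _ _
    · exact congrArg _ (Subtype.ext (congrArg Sum.inr swapAt_swapAt))

lemma nbrCF {c : Comp X} {f : Face X} (h : NbrCF X c f) :
    NbrCF Y (hp.compMap c) (hp.faceMap f) := by
  obtain ⟨⟨x, hx⟩, ⟨s, hs⟩, rfl, rfl, h, k, k', rfl, rfl, hk⟩ := h
  obtain ⟨h₀, j, j', hne, hj, hc, hf⟩ := hp.nbr_off h k k' hx hs hk
  refine ⟨⟨_, (hp.validPlace_iff hne).2 hc.2.1⟩, ⟨_, (hp.validSpot_iff hne).2 hf.2.1⟩, ?_, ?_,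
    h₀, j, j', rfl, rfl, hj⟩
  · rw [hc.mk_eq hx hc.2.1, hp.compMap_mk_of_ne _ hne]
  · rw [hf.mk_eq hs hf.2.1, hp.faceMap_mk_of_ne _ hne]

include hq in
theorem exists_equiv :
    ∃ (φF : Face X ≃ Face Y) (φC : Comp X ≃ Comp Y),
      ∀ (c : Comp X) (f : Face X), NbrCF X c f ↔ NbrCF Y (φC c) (φF f) :=
  ⟨⟨hp.faceMap, hq.faceMap, hp.faceMap_faceMap hq, hq.faceMap_faceMap hp⟩,
    ⟨hp.compMap, hq.compMap, hp.compMap_compMap hq, hq.compMap_compMap hp⟩,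
    fun _ _ => ⟨hp.nbrCF, fun h => by
      simpa only [Equiv.coe_fn_mk, hp.faceMap_faceMap hq, hp.compMap_compMap hq] using hq.nbrCF h⟩⟩

end IsPush

end Push

lemma exists_witness_succ (hX : X.Valid) (hh : h < X.N) (hx : ValidPlace X (.inl (h, k')))
    (hs : ValidSpot X (h, k)) (hk : k' = k ∨ k' = k + 1)
    (hpass : k' ≤ X.H h ∨ X.H h + X.I h < k') :
    ∃ j j', (j' = j ∨ j' = j + 1) ∧ SameComp X (.inl (h, k')) (.inl (h + 1, j')) ∧
      SameFace X (h, k) (h + 1, j) := by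
  obtain ⟨-, hk₁, hk'⟩ := hx
  obtain ⟨-, hkW⟩ := hs
  simp only at hk' hkW
  rcases hpass with hpass | hpass
  · exact ⟨k, k', hk, sameComp_straight hX hh hk₁ hpass, sameFace_straight hX hh (by omega)⟩
  · exact ⟨k + X.O h - X.I h, k' + X.O h - X.I h, by omega,
      sameComp_shift hX hh hpass hk' (by omega), sameFace_shift hh (by omega) hkW (by omega)⟩

lemma exists_witness_pred (hX : X.Valid) (hh : h < X.N) (hx : ValidPlace X (.inl (h + 1, k')))
    (hs : ValidSpot X (h + 1, k)) (hk : k' = k ∨ k' = k + 1)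
    (hpass : k' ≤ X.H h ∨ X.H h + X.O h < k') :
    ∃ j j', (j' = j ∨ j' = j + 1) ∧ SameComp X (.inl (h + 1, k')) (.inl (h, j')) ∧
      SameFace X (h + 1, k) (h, j) := by
  obtain ⟨-, hk₁, hk'⟩ := hx
  obtain ⟨-, hkW⟩ := hs
  have := hX.le_W hh
  have := X.W_succ h
  simp only at hk' hkW
  rcases hpass with hpass | hpass
  · exact ⟨k, k', hk, (sameComp_straight hX hh hk₁ hpass).symm,
      (sameFace_straight hX hh (by omega)).symm⟩
  · exact ⟨k + X.I h - X.O h, k' + X.I h - X.O h, by omega,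
      (sameComp_shift hX hh (by omega) (by omega) (by omega)).symm,
      (sameFace_shift hh (by omega) (by omega) (by omega)).symm⟩

lemma exists_witness_ne (hX : X.Valid) (hn : n + 1 < X.N)
    (hsep : X.H n + X.O n ≤ X.H (n + 1) ∨ X.H (n + 1) + X.I (n + 1) ≤ X.H n)
    (hx : ValidPlace X (.inl (h, k'))) (hs : ValidSpot X (h, k)) (hk : k' = k ∨ k' = k + 1) :
    ∃ h₀ j j', h₀ ≠ n + 1 ∧ (j' = j ∨ j' = j + 1) ∧
      SameComp X (.inl (h, k')) (.inl (h₀, j')) ∧ SameFace X (h, k) (h₀, j) := by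
  by_cases hh : h = n + 1
  · subst hh
    by_cases hup : k' ≤ X.H n ∨ X.H n + X.O n < k'
    · obtain ⟨j, j', hj, hc, hf⟩ := exists_witness_pred hX (by omega) hx hs hk hup
      exact ⟨n, j, j', by omega, hj, hc, hf⟩
    · obtain ⟨j, j', hj, hc, hf⟩ := exists_witness_succ hX hn hx hs hk (by omega)
      exact ⟨n + 1 + 1, j, j', by omega, hj, hc, hf⟩
  · exact ⟨h, k, k', hh, hk, sameComp_refl hx, sameFace_refl hs⟩

/-- In a right-exchangeable diagram, a spot or edge at level `n + 1` either lies left of the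
inputs of vertex `n + 1` and continues straight down, or lies right of the outputs of vertex `n`
and continues up. -/
def rightPush (X : Diagram) (n : ℕ) : ℕ × ℕ → ℕ × ℕ
  | (h, k) =>
    if h = n + 1 then (if k ≤ X.H (n + 1) then (n + 2, k) else (n, k + X.I n - X.O n)) else (h, k)

section RightPush

lemma rightPush_of_ne {s : ℕ × ℕ} (hs : s.1 ≠ n + 1) : X.rightPush n s = s := by
  obtain ⟨h, k⟩ := s
  simp_all [rightPush]

lemma rightPush_of_le (hk : k ≤ X.H (n + 1)) : X.rightPush n (n + 1, k) = (n + 2, k) := by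
  simp [rightPush, hk]

lemma rightPush_of_lt (hk : X.H (n + 1) < k) :
    X.rightPush n (n + 1, k) = (n, k + X.I n - X.O n) := by
  simp [rightPush, Nat.not_le.2 hk]

lemma rightPush_fst_ne (s : ℕ × ℕ) : (X.rightPush n s).1 ≠ n + 1 := by
  obtain ⟨h, k⟩ := s
  simp only [rightPush]; split_ifs <;> simp_all

lemma sameFace_rightExchange_of_ne (h₀ : h ≠ n) (h₁ : h ≠ n + 1) {hs ht}
    (hst : SpotAdj X ⟨(h, j), hs⟩ ⟨(h + 1, k), ht⟩) :
    SameFace (X.rightExchange n) (h, j) (h + 1, k) := by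
  obtain ⟨-, hh, hadj⟩ := hst
  exact sameFace_of_spotAdj (s := ⟨(h, j), by simpa [ValidSpot, h₁] using hs⟩)
    (t := ⟨(h + 1, k), by simpa [ValidSpot, h₀] using ht⟩)
    ⟨rfl, hh, by simpa [Δ, swapAt_of_ne h₀ h₁, h₀, h₁] using hadj⟩

lemma sameComp_rightExchange_of_ne (h₀ : h ≠ n) (h₁ : h ≠ n + 1) {hx hy}
    (hxy : PlaceAdj X ⟨.inl (h, j), hx⟩ ⟨.inl (h + 1, k), hy⟩) :
    SameComp (X.rightExchange n) (.inl (h, j)) (.inl (h + 1, k)) := by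
  obtain ⟨-, hh, hadj⟩ := hxy
  exact sameComp_of_placeAdj (x := ⟨.inl (h, j), by simpa [ValidPlace, h₁] using hx⟩)
    (y := ⟨.inl (h + 1, k), by simpa [ValidPlace, h₀] using hy⟩)
    ⟨rfl, hh, by simpa [Δ, swapAt_of_ne h₀ h₁, h₀, h₁] using hadj⟩

variable (hX : X.Valid) (hA : X.AdmitsRight n)
include hX hA

lemma sameFace_rightPush_at (hj : (j : ℤ) ≤ X.W n)
    (hadj : (k = j ∧ j ≤ X.H n) ∨ ((k : ℤ) = j + X.Δ n ∧ X.H n + X.I n ≤ j)) :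
    SameFace (X.rightExchange n) (n, j) (X.rightPush n (n + 1, k)) := by
  have hY := hX.rightExchange hA
  have hHY := hA.H_rightExchange_add
  obtain ⟨hN, hH⟩ := hA
  obtain ⟨b₀, b₁, w₁, w₂⟩ := hX.bounds hN
  simp only [Δ] at hadj
  rcases hadj with ⟨rfl, hj'⟩ | ⟨hk, hj'⟩
  · rw [rightPush_of_le (by omega)]
    exact (sameFace_straight hY (by simp; omega) (by omega)).trans
      (sameFace_straight hY (by simp; omega) (by simp; omega))
  by_cases hk' : k ≤ X.H (n + 1)
  · rw [rightPush_of_le hk']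
    exact (sameFace_straight hY (by simp; omega) (by omega)).trans
      (sameFace_shift (by simp; omega) (by simp; omega) (by simp; omega) (by simp; omega))
  · rw [rightPush_of_lt (by omega), show k + X.I n - X.O n = j by omega]
    exact sameFace_refl ⟨by simp; omega, by simpa using hj⟩

lemma sameFace_rightPush_at_succ (hj : (j : ℤ) ≤ X.W (n + 1))
    (hadj : (l = j ∧ j ≤ X.H (n + 1)) ∨
      ((l : ℤ) = j + X.Δ (n + 1) ∧ X.H (n + 1) + X.I (n + 1) ≤ j)) :
    SameFace (X.rightExchange n) (X.rightPush n (n + 1, j)) (n + 2, l) := by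
  have hY := hX.rightExchange hA
  have hHY := hA.H_rightExchange_add
  obtain ⟨hN, hH⟩ := hA
  obtain ⟨b₀, b₁, w₁, w₂⟩ := hX.bounds hN
  simp only [Δ] at hadj
  rcases hadj with ⟨rfl, hj'⟩ | ⟨hl, hj'⟩
  · rw [rightPush_of_le hj']
    exact sameFace_refl ⟨by simp; omega, by simp; omega⟩
  by_cases hj'' : j ≤ X.H (n + 1)
  · -- vertex `n + 1` has no inputs, and its two sides are joined through the level above it
    rw [rightPush_of_le hj'']
    set c := (X.rightExchange n).H n
    have e₁ : SameFace (X.rightExchange n) (n, c) (n + 1, c) :=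
      sameFace_straight hY (by simp; omega) le_rfl
    have e₂ : SameFace (X.rightExchange n) (n + 1, c) (n + 2, j) :=
      sameFace_shift (by simp; omega) (by simp; omega) (by simp; omega) (by simp; omega)
    have e₃ : SameFace (X.rightExchange n) (n, c) (n + 1, c + X.O (n + 1)) :=
      sameFace_shift (by simp; omega) (by simp; omega) (by simp; omega) (by simp; omega)
    have e₄ : SameFace (X.rightExchange n) (n + 1, c + X.O (n + 1)) (n + 2, l) :=
      sameFace_shift (by simp; omega) (by simp; omega) (by simp; omega) (by simp; omega)
    exact e₂.symm.trans (e₁.symm.trans (e₃.trans e₄))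
  · rw [rightPush_of_lt (by omega)]
    exact (sameFace_shift (k' := j + X.I n - X.O n + X.O (n + 1) - X.I (n + 1)) (by simp; omega)
      (by simp; omega) (by simp; omega) (by simp; omega)).trans
      (sameFace_shift (by simp; omega) (by simp; omega) (by simp; omega) (by simp; omega))

lemma sameFace_rightPush_of_spotAdj {s t : Spot X} (hst : SpotAdj X s t) :
    SameFace (X.rightExchange n) (X.rightPush n s.1) (X.rightPush n t.1) := by
  obtain ⟨⟨h, j⟩, hs⟩ := s
  obtain ⟨⟨h', k⟩, ht⟩ := t
  obtain ⟨rfl, hh, hadj⟩ := id hst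
  by_cases h₀ : h = n
  · subst h₀
    rw [rightPush_of_ne (s := (h, j)) (by simp)]
    exact sameFace_rightPush_at hX hA hs.2 hadj
  by_cases h₁ : h = n + 1
  · subst h₁
    rw [rightPush_of_ne (s := (n + 1 + 1, k)) (by simp)]
    exact sameFace_rightPush_at_succ hX hA hs.2 hadj
  rw [rightPush_of_ne (by simpa using h₁), rightPush_of_ne (by simpa using h₀)]
  exact sameFace_rightExchange_of_ne h₀ h₁ hst

lemma sameFace_rightPush {s : ℕ × ℕ} (hs : ValidSpot X s) : SameFace X s (X.rightPush n s) := by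
  obtain ⟨h, k⟩ := s
  obtain ⟨hN, hH⟩ := hA
  obtain ⟨b₀, b₁, w₁, w₂⟩ := hX.bounds hN
  by_cases h₁ : h = n + 1
  · subst h₁
    obtain ⟨-, hk⟩ := hs
    by_cases hk' : k ≤ X.H (n + 1)
    · rw [rightPush_of_le hk']
      exact sameFace_straight hX hN hk'
    · rw [rightPush_of_lt (by omega)]
      exact (sameFace_shift (by omega) (by omega) (by simp at hk; omega) (by omega)).symm
  · rw [rightPush_of_ne h₁]
    exact sameFace_refl hs

lemma sameComp_rightPush {e : ℕ × ℕ} (he : ValidPlace X (.inl e)) :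
    SameComp X (.inl e) (.inl (X.rightPush n e)) := by
  obtain ⟨h, k⟩ := e
  obtain ⟨hN, hH⟩ := hA
  obtain ⟨b₀, b₁, w₁, w₂⟩ := hX.bounds hN
  by_cases h₁ : h = n + 1
  · subst h₁
    obtain ⟨-, hk₁, hk⟩ := he
    by_cases hk' : k ≤ X.H (n + 1)
    · rw [rightPush_of_le hk']
      exact sameComp_straight hX hN hk₁ hk'
    · rw [rightPush_of_lt (by omega)]
      exact (sameComp_shift hX (by omega) (by omega) (by omega) (by omega)).symm
  · rw [rightPush_of_ne h₁]
    exact sameComp_refl he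

lemma sameComp_rightPush_at (hj₁ : 1 ≤ j) (hj : (j : ℤ) ≤ X.W n)
    (hadj : (k = j ∧ j ≤ X.H n) ∨ ((k : ℤ) = j + X.Δ n ∧ X.H n + X.I n + 1 ≤ j)) :
    SameComp (X.rightExchange n) (.inl (n, j)) (.inl (X.rightPush n (n + 1, k))) := by
  have hY := hX.rightExchange hA
  have hHY := hA.H_rightExchange_add
  obtain ⟨hN, hH⟩ := hA
  obtain ⟨b₀, b₁, w₁, w₂⟩ := hX.bounds hN
  simp only [Δ] at hadj
  rcases hadj with ⟨rfl, hj''⟩ | ⟨hk, hj''⟩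
  · rw [rightPush_of_le (by omega)]
    exact (sameComp_straight hY (by simp; omega) hj₁ (by omega)).trans
      (sameComp_straight hY (by simp; omega) hj₁ (by simp; omega))
  by_cases hk' : k ≤ X.H (n + 1)
  · rw [rightPush_of_le hk']
    exact (sameComp_straight hY (by simp; omega) hj₁ (by omega)).trans
      (sameComp_shift hY (by simp; omega) (by simp; omega) (by simp; omega) (by simp; omega))
  · rw [rightPush_of_lt (by omega), show k + X.I n - X.O n = j by omega]
    exact sameComp_refl ⟨by simp; omega, hj₁, by simpa using hj⟩

lemma sameComp_rightPush_at_succ (hj₁ : 1 ≤ j) (hj : (j : ℤ) ≤ X.W (n + 1))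
    (hadj : (l = j ∧ j ≤ X.H (n + 1)) ∨
      ((l : ℤ) = j + X.Δ (n + 1) ∧ X.H (n + 1) + X.I (n + 1) + 1 ≤ j)) :
    SameComp (X.rightExchange n) (.inl (X.rightPush n (n + 1, j))) (.inl (n + 2, l)) := by
  have hY := hX.rightExchange hA
  have hHY := hA.H_rightExchange_add
  obtain ⟨hN, hH⟩ := hA
  obtain ⟨b₀, b₁, w₁, w₂⟩ := hX.bounds hN
  simp only [Δ] at hadj
  rcases hadj with ⟨rfl, hj'⟩ | ⟨hl, hj'⟩
  · rw [rightPush_of_le hj']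
    exact sameComp_refl ⟨by simp; omega, hj₁, by simp; omega⟩
  · rw [rightPush_of_lt (by omega)]
    exact (sameComp_shift (k' := j + X.I n - X.O n + X.O (n + 1) - X.I (n + 1)) hY
      (by simp; omega) (by simp; omega) (by simp; omega) (by simp; omega)).trans
      (sameComp_shift hY (by simp; omega) (by simp; omega) (by simp; omega) (by simp; omega))

lemma sameComp_rightPush_input (hv : v < X.N) (hk : X.H v < k)
    (hk' : k ≤ X.H v + X.I v) :
    SameComp (X.rightExchange n) (.inl (X.rightPush n (v, k))) (.inr (swapAt n v)) := by
  have hY := hX.rightExchange hA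
  have hHY := hA.H_rightExchange_add
  obtain ⟨hN, hH⟩ := hA
  obtain ⟨b₀, b₁, w₁, w₂⟩ := hX.bounds hN
  by_cases h₀ : v = n
  · subst h₀
    rw [rightPush_of_ne (by simp), swapAt_self]
    exact (sameComp_straight hY (by simp; omega) (by omega) (by omega)).trans
      (sameComp_input hY (by simp; omega) (by simp; omega) (by simp; omega))
  by_cases h₁ : v = n + 1
  · subst h₁
    rw [rightPush_of_lt (by omega), swapAt_succ]
    exact sameComp_input hY (by simp; omega) (by omega) (by simp; omega)
  rw [rightPush_of_ne h₁, swapAt_of_ne h₀ h₁]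
  exact sameComp_input hY (by simpa using hv) (by simp [h₀, h₁]; omega)
    (by simp [h₀, h₁, swapAt_of_ne h₀ h₁]; omega)

lemma sameComp_rightPush_output (hv : v < X.N) (hk : X.H v < k)
    (hk' : k ≤ X.H v + X.O v) :
    SameComp (X.rightExchange n) (.inl (X.rightPush n (v + 1, k))) (.inr (swapAt n v)) := by
  have hY := hX.rightExchange hA
  have hHY := hA.H_rightExchange_add
  obtain ⟨hN, hH⟩ := hA
  obtain ⟨b₀, b₁, w₁, w₂⟩ := hX.bounds hN
  by_cases h₀ : v = n
  · subst h₀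
    rw [rightPush_of_le (by omega), swapAt_self]
    exact sameComp_output hY (by simp; omega) (by simp; omega) (by simp; omega)
  by_cases h₁ : v = n + 1
  · subst h₁
    rw [rightPush_of_ne (by simp), swapAt_succ]
    exact (sameComp_shift (k := k + X.I n - X.O n) hY (by simp; omega) (by simp; omega)
      (by simp; omega) (by simp; omega)).symm.trans
      (sameComp_output hY (by simp; omega) (by omega) (by simp; omega))
  rw [rightPush_of_ne (by simpa using h₀), swapAt_of_ne h₀ h₁]
  exact sameComp_output hY (by simpa using hv) (by simp [h₀, h₁]; omega)
    (by simp [h₀, h₁, swapAt_of_ne h₀ h₁]; omega)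

lemma sameComp_rightPush_of_placeAdj {x y : Place X} (hxy : PlaceAdj X x y) :
    SameComp (X.rightExchange n) (Sum.map (X.rightPush n) (swapAt n) x.1)
      (Sum.map (X.rightPush n) (swapAt n) y.1) := by
  have edge_vertex : ∀ {h k v}, v < X.N → PlaceAdjRaw X (.inl (h, k)) (.inr v) →
      SameComp (X.rightExchange n) (.inl (X.rightPush n (h, k))) (.inr (swapAt n v)) := by
    rintro h k v hv (⟨rfl, hk, hk'⟩ | ⟨rfl, hk, hk'⟩)
    · exact sameComp_rightPush_input hX hA hv hk hk'
    · exact sameComp_rightPush_output hX hA hv hk hk'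
  obtain ⟨⟨h, j⟩ | v, hx⟩ := x <;> obtain ⟨⟨h', k⟩ | w, hy⟩ := y
  · obtain ⟨rfl, hh, hadj⟩ := id hxy
    simp only [Sum.map_inl]
    by_cases h₀ : h = n
    · subst h₀
      rw [rightPush_of_ne (s := (h, j)) (by simp)]
      exact sameComp_rightPush_at hX hA hx.2.1 hx.2.2 hadj
    by_cases h₁ : h = n + 1
    · subst h₁
      rw [rightPush_of_ne (s := (n + 1 + 1, k)) (by simp)]
      exact sameComp_rightPush_at_succ hX hA hx.2.1 hx.2.2 hadj
    rw [rightPush_of_ne (by simpa using h₁), rightPush_of_ne (by simpa using h₀)]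
    exact sameComp_rightExchange_of_ne h₀ h₁ hxy
  · exact edge_vertex hy hxy
  · exact (edge_vertex hx hxy).symm
  · exact hxy.elim

end RightPush

theorem isPush_rightPush (hX : X.Valid) (hA : X.AdmitsRight n) :
    IsPush X (X.rightExchange n) n (X.rightPush n) where
  N_eq := rfl
  succ_lt := hA.1
  W_eq _ hh := by simp [hh]
  eq_self _ := rightPush_of_ne
  fst_ne := rightPush_fst_ne
  sameFace _ := sameFace_rightPush hX hA
  sameComp _ := sameComp_rightPush hX hA
  sameFace_of_adj _ _ := sameFace_rightPush_of_spotAdj hX hA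
  sameComp_of_adj _ _ := sameComp_rightPush_of_placeAdj hX hA
  nbr_off _ _ _ := exists_witness_ne hX hA.1 (.inl hA.2)

/-- In a left-exchangeable diagram, a spot or edge at level `n + 1` either lies left of the
outputs of vertex `n` and continues straight up, or lies right of the inputs of vertex `n + 1`
and continues down. -/
def leftPush (X : Diagram) (n : ℕ) : ℕ × ℕ → ℕ × ℕ
  | (h, k) =>
    if h = n + 1 then (if k ≤ X.H n then (n, k) else (n + 2, k + X.O (n + 1) - X.I (n + 1)))
    else (h, k)

section LeftPush

lemma leftPush_of_ne {s : ℕ × ℕ} (hs : s.1 ≠ n + 1) : X.leftPush n s = s := by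
  obtain ⟨h, k⟩ := s
  simp_all [leftPush]

lemma leftPush_of_le (hk : k ≤ X.H n) : X.leftPush n (n + 1, k) = (n, k) := by
  simp [leftPush, hk]

lemma leftPush_of_lt (hk : X.H n < k) :
    X.leftPush n (n + 1, k) = (n + 2, k + X.O (n + 1) - X.I (n + 1)) := by
  simp [leftPush, Nat.not_le.2 hk]

lemma leftPush_fst_ne (s : ℕ × ℕ) : (X.leftPush n s).1 ≠ n + 1 := by
  obtain ⟨h, k⟩ := s
  simp only [leftPush]; split_ifs <;> simp_all

lemma sameFace_leftExchange_of_ne (h₀ : h ≠ n) (h₁ : h ≠ n + 1) {hs ht}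
    (hst : SpotAdj X ⟨(h, j), hs⟩ ⟨(h + 1, k), ht⟩) :
    SameFace (X.leftExchange n) (h, j) (h + 1, k) := by
  obtain ⟨-, hh, hadj⟩ := hst
  exact sameFace_of_spotAdj (s := ⟨(h, j), by simpa [ValidSpot, h₁] using hs⟩)
    (t := ⟨(h + 1, k), by simpa [ValidSpot, h₀] using ht⟩)
    ⟨rfl, hh, by simpa [Δ, swapAt_of_ne h₀ h₁, h₀, h₁] using hadj⟩

lemma sameComp_leftExchange_of_ne (h₀ : h ≠ n) (h₁ : h ≠ n + 1) {hx hy}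
    (hxy : PlaceAdj X ⟨.inl (h, j), hx⟩ ⟨.inl (h + 1, k), hy⟩) :
    SameComp (X.leftExchange n) (.inl (h, j)) (.inl (h + 1, k)) := by
  obtain ⟨-, hh, hadj⟩ := hxy
  exact sameComp_of_placeAdj (x := ⟨.inl (h, j), by simpa [ValidPlace, h₁] using hx⟩)
    (y := ⟨.inl (h + 1, k), by simpa [ValidPlace, h₀] using hy⟩)
    ⟨rfl, hh, by simpa [Δ, swapAt_of_ne h₀ h₁, h₀, h₁] using hadj⟩

variable (hX : X.Valid) (hA : X.AdmitsLeft n)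
include hX hA

lemma sameFace_leftPush_at (hj : (j : ℤ) ≤ X.W n)
    (hadj : (k = j ∧ j ≤ X.H n) ∨ ((k : ℤ) = j + X.Δ n ∧ X.H n + X.I n ≤ j)) :
    SameFace (X.leftExchange n) (n, j) (X.leftPush n (n + 1, k)) := by
  have hY := hX.leftExchange hA
  have hHY := hA.H_leftExchange_add
  obtain ⟨hN, hH⟩ := hA
  obtain ⟨b₀, b₁, w₁, w₂⟩ := hX.bounds hN
  simp only [Δ] at hadj
  rcases hadj with ⟨rfl, hj'⟩ | ⟨hk, hj'⟩
  · rw [leftPush_of_le hj']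
    exact sameFace_refl ⟨by simp; omega, by simpa using hj⟩
  by_cases hk' : k ≤ X.H n
  · -- vertex `n` has no outputs, and its two sides are joined through the level below it
    rw [leftPush_of_le hk']
    set c := (X.leftExchange n).H (n + 1)
    have e₁ : SameFace (X.leftExchange n) (n, j) (n + 1, c + X.I n) :=
      sameFace_shift (by simp; omega) (by simp; omega) (by simp; omega) (by simp; omega)
    have e₂ : SameFace (X.leftExchange n) (n + 1, c + X.I n) (n + 2, c) :=
      sameFace_shift (by simp; omega) (by simp [c]) (by simp; omega) (by simp; omega)
    have e₃ : SameFace (X.leftExchange n) (n, k) (n + 1, c) :=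
      sameFace_shift (by simp; omega) (by simp; omega) (by simp; omega) (by simp; omega)
    have e₄ : SameFace (X.leftExchange n) (n + 1, c) (n + 2, c) :=
      sameFace_straight hY (by simp; omega) le_rfl
    exact e₁.trans (e₂.trans (e₄.symm.trans e₃.symm))
  · rw [leftPush_of_lt (by omega)]
    exact (sameFace_shift (k' := j + X.O (n + 1) - X.I (n + 1)) (by simp; omega)
      (by simp; omega) (by simp; omega) (by simp; omega)).trans
      (sameFace_shift (by simp; omega) (by simp; omega) (by simp; omega) (by simp; omega))

lemma sameFace_leftPush_at_succ (hj : (j : ℤ) ≤ X.W (n + 1))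
    (hadj : (l = j ∧ j ≤ X.H (n + 1)) ∨
      ((l : ℤ) = j + X.Δ (n + 1) ∧ X.H (n + 1) + X.I (n + 1) ≤ j)) :
    SameFace (X.leftExchange n) (X.leftPush n (n + 1, j)) (n + 2, l) := by
  have hY := hX.leftExchange hA
  have hHY := hA.H_leftExchange_add
  obtain ⟨hN, hH⟩ := hA
  obtain ⟨b₀, b₁, w₁, w₂⟩ := hX.bounds hN
  simp only [Δ] at hadj
  rcases hadj with ⟨rfl, hj'⟩ | ⟨hl, hj'⟩
  · rw [leftPush_of_le (by omega)]
    exact (sameFace_straight hY (by simp; omega) (by simp; omega)).trans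
      (sameFace_straight hY (by simp; omega) (by omega))
  by_cases hj'' : j ≤ X.H n
  · rw [leftPush_of_le hj'']
    exact (sameFace_shift (by simp; omega) (by simp; omega) (by simp; omega) (by simp; omega)).trans
      (sameFace_straight hY (by simp; omega) (by omega))
  · rw [leftPush_of_lt (by omega), show j + X.O (n + 1) - X.I (n + 1) = l by omega]
    exact sameFace_refl ⟨by simp; omega, by simp; omega⟩

lemma sameFace_leftPush_of_spotAdj {s t : Spot X} (hst : SpotAdj X s t) :
    SameFace (X.leftExchange n) (X.leftPush n s.1) (X.leftPush n t.1) := by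
  obtain ⟨⟨h, j⟩, hs⟩ := s
  obtain ⟨⟨h', k⟩, ht⟩ := t
  obtain ⟨rfl, hh, hadj⟩ := id hst
  by_cases h₀ : h = n
  · subst h₀
    rw [leftPush_of_ne (s := (h, j)) (by simp)]
    exact sameFace_leftPush_at hX hA hs.2 hadj
  by_cases h₁ : h = n + 1
  · subst h₁
    rw [leftPush_of_ne (s := (n + 1 + 1, k)) (by simp)]
    exact sameFace_leftPush_at_succ hX hA hs.2 hadj
  rw [leftPush_of_ne (by simpa using h₁), leftPush_of_ne (by simpa using h₀)]
  exact sameFace_leftExchange_of_ne h₀ h₁ hst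

lemma sameFace_leftPush {s : ℕ × ℕ} (hs : ValidSpot X s) : SameFace X s (X.leftPush n s) := by
  obtain ⟨h, k⟩ := s
  obtain ⟨hN, hH⟩ := hA
  obtain ⟨b₀, b₁, w₁, w₂⟩ := hX.bounds hN
  by_cases h₁ : h = n + 1
  · subst h₁
    obtain ⟨-, hk⟩ := hs
    by_cases hk' : k ≤ X.H n
    · rw [leftPush_of_le hk']
      exact (sameFace_straight hX (by omega) hk').symm
    · rw [leftPush_of_lt (by omega)]
      exact sameFace_shift hN (by omega) hk (by omega)
  · rw [leftPush_of_ne h₁]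
    exact sameFace_refl hs

lemma sameComp_leftPush {e : ℕ × ℕ} (he : ValidPlace X (.inl e)) :
    SameComp X (.inl e) (.inl (X.leftPush n e)) := by
  obtain ⟨h, k⟩ := e
  obtain ⟨hN, hH⟩ := hA
  obtain ⟨b₀, b₁, w₁, w₂⟩ := hX.bounds hN
  by_cases h₁ : h = n + 1
  · subst h₁
    obtain ⟨-, hk₁, hk⟩ := he
    by_cases hk' : k ≤ X.H n
    · rw [leftPush_of_le hk']
      exact (sameComp_straight hX (by omega) hk₁ hk').symm
    · rw [leftPush_of_lt (by omega)]
      exact sameComp_shift hX hN (by omega) hk (by omega)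
  · rw [leftPush_of_ne h₁]
    exact sameComp_refl he

lemma sameComp_leftPush_at (hj₁ : 1 ≤ j) (hj : (j : ℤ) ≤ X.W n)
    (hadj : (k = j ∧ j ≤ X.H n) ∨ ((k : ℤ) = j + X.Δ n ∧ X.H n + X.I n + 1 ≤ j)) :
    SameComp (X.leftExchange n) (.inl (n, j)) (.inl (X.leftPush n (n + 1, k))) := by
  have hY := hX.leftExchange hA
  have hHY := hA.H_leftExchange_add
  obtain ⟨hN, hH⟩ := hA
  obtain ⟨b₀, b₁, w₁, w₂⟩ := hX.bounds hN
  simp only [Δ] at hadj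
  rcases hadj with ⟨rfl, hj'⟩ | ⟨hk, hj'⟩
  · rw [leftPush_of_le hj']
    exact sameComp_refl ⟨by simp; omega, hj₁, by simpa using hj⟩
  · rw [leftPush_of_lt (by omega)]
    exact (sameComp_shift (k' := j + X.O (n + 1) - X.I (n + 1)) hY (by simp; omega)
      (by simp; omega) (by simp; omega) (by simp; omega)).trans
      (sameComp_shift hY (by simp; omega) (by simp; omega) (by simp; omega) (by simp; omega))

lemma sameComp_leftPush_at_succ (hj₁ : 1 ≤ j) (hj : (j : ℤ) ≤ X.W (n + 1))
    (hadj : (l = j ∧ j ≤ X.H (n + 1)) ∨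
      ((l : ℤ) = j + X.Δ (n + 1) ∧ X.H (n + 1) + X.I (n + 1) + 1 ≤ j)) :
    SameComp (X.leftExchange n) (.inl (X.leftPush n (n + 1, j))) (.inl (n + 2, l)) := by
  have hY := hX.leftExchange hA
  have hHY := hA.H_leftExchange_add
  obtain ⟨hN, hH⟩ := hA
  obtain ⟨b₀, b₁, w₁, w₂⟩ := hX.bounds hN
  simp only [Δ] at hadj
  rcases hadj with ⟨rfl, hj'⟩ | ⟨hl, hj'⟩
  · rw [leftPush_of_le (by omega)]
    exact (sameComp_straight hY (by simp; omega) hj₁ (by simp; omega)).trans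
      (sameComp_straight hY (by simp; omega) hj₁ (by omega))
  by_cases hj'' : j ≤ X.H n
  · rw [leftPush_of_le hj'']
    exact (sameComp_shift hY (by simp; omega) (by simp; omega) (by simp; omega)
      (by simp; omega)).trans (sameComp_straight hY (by simp; omega) (by omega) (by omega))
  · rw [leftPush_of_lt (by omega), show j + X.O (n + 1) - X.I (n + 1) = l by omega]
    exact sameComp_refl ⟨by simp; omega, by omega, by simp; omega⟩

lemma sameComp_leftPush_input (hv : v < X.N) (hk : X.H v < k)
    (hk' : k ≤ X.H v + X.I v) :
    SameComp (X.leftExchange n) (.inl (X.leftPush n (v, k))) (.inr (swapAt n v)) := by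
  have hY := hX.leftExchange hA
  have hHY := hA.H_leftExchange_add
  obtain ⟨hN, hH⟩ := hA
  obtain ⟨b₀, b₁, w₁, w₂⟩ := hX.bounds hN
  by_cases h₀ : v = n
  · subst h₀
    rw [leftPush_of_ne (by simp), swapAt_self]
    exact (sameComp_shift (k' := k + X.O (v + 1) - X.I (v + 1)) hY (by simp; omega)
      (by simp; omega) (by simp; omega) (by simp; omega)).trans
      (sameComp_input hY (by simp; omega) (by omega) (by simp; omega))
  by_cases h₁ : v = n + 1
  · subst h₁
    rw [leftPush_of_le (by omega), swapAt_succ]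
    exact sameComp_input hY (by simp; omega) (by simp; omega) (by simp; omega)
  rw [leftPush_of_ne h₁, swapAt_of_ne h₀ h₁]
  exact sameComp_input hY (by simpa using hv) (by simp [h₀, h₁]; omega)
    (by simp [h₀, h₁, swapAt_of_ne h₀ h₁]; omega)

lemma sameComp_leftPush_output (hv : v < X.N) (hk : X.H v < k)
    (hk' : k ≤ X.H v + X.O v) :
    SameComp (X.leftExchange n) (.inl (X.leftPush n (v + 1, k))) (.inr (swapAt n v)) := by
  have hY := hX.leftExchange hA
  have hHY := hA.H_leftExchange_add
  obtain ⟨hN, hH⟩ := hA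
  obtain ⟨b₀, b₁, w₁, w₂⟩ := hX.bounds hN
  by_cases h₀ : v = n
  · subst h₀
    rw [leftPush_of_lt (by omega), swapAt_self]
    exact sameComp_output hY (by simp; omega) (by omega) (by simp; omega)
  by_cases h₁ : v = n + 1
  · subst h₁
    rw [leftPush_of_ne (by simp), swapAt_succ]
    exact (sameComp_straight hY (by simp; omega) (by omega) (by omega)).symm.trans
      (sameComp_output hY (by simp; omega) (by simp; omega) (by simp; omega))
  rw [leftPush_of_ne (by simpa using h₀), swapAt_of_ne h₀ h₁]
  exact sameComp_output hY (by simpa using hv) (by simp [h₀, h₁]; omega)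
    (by simp [h₀, h₁, swapAt_of_ne h₀ h₁]; omega)

lemma sameComp_leftPush_of_placeAdj {x y : Place X} (hxy : PlaceAdj X x y) :
    SameComp (X.leftExchange n) (Sum.map (X.leftPush n) (swapAt n) x.1)
      (Sum.map (X.leftPush n) (swapAt n) y.1) := by
  have edge_vertex : ∀ {h k v}, v < X.N → PlaceAdjRaw X (.inl (h, k)) (.inr v) →
      SameComp (X.leftExchange n) (.inl (X.leftPush n (h, k))) (.inr (swapAt n v)) := by
    rintro h k v hv (⟨rfl, hk, hk'⟩ | ⟨rfl, hk, hk'⟩)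
    · exact sameComp_leftPush_input hX hA hv hk hk'
    · exact sameComp_leftPush_output hX hA hv hk hk'
  obtain ⟨⟨h, j⟩ | v, hx⟩ := x <;> obtain ⟨⟨h', k⟩ | w, hy⟩ := y
  · obtain ⟨rfl, hh, hadj⟩ := id hxy
    simp only [Sum.map_inl]
    by_cases h₀ : h = n
    · subst h₀
      rw [leftPush_of_ne (s := (h, j)) (by simp)]
      exact sameComp_leftPush_at hX hA hx.2.1 hx.2.2 hadj
    by_cases h₁ : h = n + 1
    · subst h₁
      rw [leftPush_of_ne (s := (n + 1 + 1, k)) (by simp)]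
      exact sameComp_leftPush_at_succ hX hA hx.2.1 hx.2.2 hadj
    rw [leftPush_of_ne (by simpa using h₁), leftPush_of_ne (by simpa using h₀)]
    exact sameComp_leftExchange_of_ne h₀ h₁ hxy
  · exact edge_vertex hy hxy
  · exact (edge_vertex hx hxy).symm
  · exact hxy.elim

end LeftPush

theorem isPush_leftPush (hX : X.Valid) (hA : X.AdmitsLeft n) :
    IsPush X (X.leftExchange n) n (X.leftPush n) where
  N_eq := rfl
  succ_lt := hA.1
  W_eq _ hh := by simp [hh]
  eq_self _ := leftPush_of_ne
  fst_ne := leftPush_fst_ne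
  sameFace _ := sameFace_leftPush hX hA
  sameComp _ := sameComp_leftPush hX hA
  sameFace_of_adj _ _ := sameFace_leftPush_of_spotAdj hX hA
  sameComp_of_adj _ _ := sameComp_leftPush_of_placeAdj hX hA
  nbr_off _ _ _ := exists_witness_ne hX hA.1 (.inr hA.2)

end Diagram

theorem exchange_bijection_faces_components_general (D : Diagram) (n : ℕ)
    (hV : D.Valid) :
    (D.AdmitsRight n →
      ∃ (φF : Face D ≃ Face (D.rightExchange n)) (φC : Comp D ≃ Comp (D.rightExchange n)),
        ∀ (c : Comp D) (f : Face D),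
          NbrCF D c f ↔ NbrCF (D.rightExchange n) (φC c) (φF f)) ∧
    (D.AdmitsLeft n →
      ∃ (φF : Face D ≃ Face (D.leftExchange n)) (φC : Comp D ≃ Comp (D.leftExchange n)),
        ∀ (c : Comp D) (f : Face D),
          NbrCF D c f ↔ NbrCF (D.leftExchange n) (φC c) (φF f)) :=
  ⟨fun hA => (isPush_rightPush hV hA).exists_equiv <| hA.leftExchange_rightExchange ▸
      isPush_leftPush (hV.rightExchange hA) hA.admitsLeft_rightExchange,
    fun hA => (isPush_leftPush hV hA).exists_equiv <| hA.rightExchange_leftExchange ▸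
      isPush_rightPush (hV.leftExchange hA) hA.admitsRight_leftExchange⟩

/-- a single (right or left) exchange induces bijections between faces
and between components which respect the neighbourhood relation `c ◊ f`. -/
theorem exchange_bijection_faces_components (D : Diagram) (n : ℕ)
    (hV : D.Valid) (hC : D.Closed) :
    (D.AdmitsRight n →
      ∃ (φF : Face D ≃ Face (D.rightExchange n)) (φC : Comp D ≃ Comp (D.rightExchange n)),
        ∀ (c : Comp D) (f : Face D),
          NbrCF D c f ↔ NbrCF (D.rightExchange n) (φC c) (φF f)) ∧
    (D.AdmitsLeft n →
      ∃ (φF : Face D ≃ Face (D.leftExchange n)) (φC : Comp D ≃ Comp (D.leftExchange n)),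
        ∀ (c : Comp D) (f : Face D),
          NbrCF D c f ↔ NbrCF (D.leftExchange n) (φC c) (φF f)) :=
  exchange_bijection_faces_components_general D n hV
end

section
/- Let D be a valid closed diagram. Then there is a unique face of D containing spots which are neighbours of the boundary: all spots of the form s_{h,0} or s_{h,D.W(h)} lie in a single face, denoted f₀. -/
open Diagram

/-- in a valid closed diagram, all boundary spots lie in a single face,
i.e. there is a unique face containing all spots which are neighbours of the boundary. -/
theorem unique_boundary_face (D : Diagram) (hV : D.Valid) (hC : D.Closed) :
    ∃! f : Face D, ∀ s : Spot D, IsBoundarySpot D s →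
      Quotient.mk (faceSetoid D) s = f := by
  obtain ⟨hS, hN⟩ := hC
  have hW : ∀ h, h ≤ D.N → 0 ≤ D.W h := by
    intro h hh
    rcases lt_or_eq_of_le hh with h' | h'
    · exact le_trans (by positivity) (hV h h')
    · rw [h', hN]
  -- canonical spots
  have lval : ∀ h, h ≤ D.N → ValidSpot D (h, 0) := by
    intro h hh; exact ⟨hh, by simpa using hW h hh⟩
  have rval : ∀ h, h ≤ D.N → ValidSpot D (h, (D.W h).toNat) := by
    intro h hh; exact ⟨hh, by simp [Int.toNat_of_nonneg (hW h hh)]⟩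
  set s0 : Spot D := ⟨(0, 0), lval 0 (Nat.zero_le _)⟩ with hs0
  -- left chain
  have left : ∀ h, ∀ hh : h ≤ D.N,
      Relation.EqvGen (SpotAdj D) ⟨(h, 0), lval h hh⟩ s0 := by
    intro h
    induction h with
    | zero => intro hh; exact Relation.EqvGen.refl _
    | succ n ih =>
      intro hh
      have hn : n ≤ D.N := Nat.le_of_succ_le hh
      refine Relation.EqvGen.trans _ _ _ ?_ (ih hn)
      refine Relation.EqvGen.symm _ _ (Relation.EqvGen.rel _ _ ?_)
      exact ⟨rfl, hh, Or.inl ⟨rfl, Nat.zero_le _⟩⟩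
  -- right chain (downward to level N)
  have right : ∀ j h, ∀ hj : h + j = D.N,
      Relation.EqvGen (SpotAdj D)
        ⟨(h, (D.W h).toNat), rval h (by omega)⟩
        ⟨(D.N, (D.W D.N).toNat), rval D.N le_rfl⟩ := by
    intro j
    induction j with
    | zero =>
      intro h hj
      have hj' : h = D.N := by omega
      have : (⟨(h, (D.W h).toNat), rval h (by omega)⟩ : Spot D)
           = ⟨(D.N, (D.W D.N).toNat), rval D.N le_rfl⟩ := by
        apply Subtype.ext; simp [hj']
      rw [this]
      exact Relation.EqvGen.refl _
    | succ m ih =>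
      intro h hj
      have hlt : h < D.N := by omega
      have hle : h ≤ D.N := le_of_lt hlt
      have hle1 : h + 1 ≤ D.N := hlt
      refine Relation.EqvGen.trans _ (⟨(h+1, (D.W (h+1)).toNat), rval _ hle1⟩ : Spot D) _
        (Relation.EqvGen.rel _ _ ?_) (ih (h+1) (by omega))
      refine ⟨rfl, hlt, Or.inr ⟨?_, ?_⟩⟩
      · have h1 : D.W (h+1) = D.W h + D.Δ h := rfl
        rw [Int.toNat_of_nonneg (hW (h+1) hle1), Int.toNat_of_nonneg (hW h hle), h1]
      · show D.H h + D.I h ≤ (D.W h).toNat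
        have := hV h hlt
        have h2 := Int.toNat_of_nonneg (hW h hle)
        omega
  have rootmem : IsBoundarySpot D s0 := Or.inl rfl
  refine ⟨Quotient.mk (faceSetoid D) s0, ?_, ?_⟩
  · intro s hs
    obtain ⟨⟨h, k⟩, hv⟩ := s
    have hh : h ≤ D.N := hv.1
    apply Quotient.sound
    rcases hs with hk | hk
    · simp only at hk
      subst hk
      exact left h hh
    · simp only at hk
      have hk' : k = (D.W h).toNat := by omega
      subst hk'
      refine Relation.EqvGen.trans _ _ _ (right (D.N - h) h (by omega)) ?_
      have hN0 : (D.W D.N).toNat = 0 := by rw [hN]; rfl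
      have : (⟨(D.N, (D.W D.N).toNat), rval D.N le_rfl⟩ : Spot D)
           = ⟨(D.N, 0), lval D.N le_rfl⟩ := by
        apply Subtype.ext; simp [hN0]
      rw [this]
      exact left D.N le_rfl
  · intro g hg
    exact (hg s0 rootmem).symm
end

section
/- Let D be a valid closed diagram and let s and s' be spots of D belonging to the same face. Then for every valid closed diagram D', the injections I^D_s(D') and I^D_{s'}(D') are equivalent diagrams (related by a finite sequence of exchanges). -/
open Diagram

/-! ### Auxiliary machinery for Statement 19 -/

theorem Diagram.ext' {A B : Diagram} (hS : A.S = B.S) (hN : A.N = B.N)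
    (hH : ∀ h, A.H h = B.H h) (hI : ∀ h, A.I h = B.I h) (hO : ∀ h, A.O h = B.O h) :
    A = B := by
  cases A; cases B
  simp only [Diagram.mk.injEq]
  exact ⟨hS, hN, funext hH, funext hI, funext hO⟩

/-- Wire counts of a valid diagram are nonnegative up to level `N`. -/
lemma W_nonneg (E : Diagram) (hEV : E.Valid) : ∀ m, m ≤ E.N → 0 ≤ E.W m := by
  intro m
  induction m with
  | zero => intro _; simp [Diagram.W]
  | succ m ih =>
      intro hm
      have h1 := hEV m (by omega)
      have h2 := ih (by omega)
      have h3 : E.W (m + 1) = E.W m + ((E.O m : ℤ) - (E.I m : ℤ)) := rfl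
      push_cast at h1
      omega

/-- Intermediate diagram: `D` with the closed diagram `E` injected at level `a`,
the vertex `a` of `D` moved down to height `a + m` inside the `E`-block, the `E`
vertices above it at offset `ka`, those below it at offset `kb`, and the moved
vertex at horizontal position `g m`. -/
def mid (D E : Diagram) (a ka kb : ℕ) (g : ℕ → ℕ) (m : ℕ) : Diagram where
  S := D.S
  N := D.N + E.N
  H := fun h =>
    if h < a then D.H h
    else if h < a + m then E.H (h - a) + ka
    else if h = a + m then g m
    else if h ≤ a + E.N then E.H (h - a - 1) + kb
    else D.H (h - E.N)
  I := fun h =>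
    if h < a then D.I h
    else if h < a + m then E.I (h - a)
    else if h = a + m then D.I a
    else if h ≤ a + E.N then E.I (h - a - 1)
    else D.I (h - E.N)
  O := fun h =>
    if h < a then D.O h
    else if h < a + m then E.O (h - a)
    else if h = a + m then D.O a
    else if h ≤ a + E.N then E.O (h - a - 1)
    else D.O (h - E.N)

lemma mid_top (D E : Diagram) (a ka kb : ℕ) (g : ℕ → ℕ) (hg : g E.N = D.H a) :
    mid D E a ka kb g E.N = inject D a ka E := by
  refine Diagram.ext' rfl rfl ?_ ?_ ?_ <;> intro h <;>
    · simp only [mid, inject]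
      split_ifs <;> simp_all <;> omega

lemma mid_bot (D E : Diagram) (a ka kb : ℕ) (g : ℕ → ℕ) (hg : g 0 = D.H a) :
    mid D E a ka kb g 0 = inject D (a + 1) kb E := by
  refine Diagram.ext' rfl rfl ?_ ?_ ?_ <;> intro h <;>
    · simp only [mid, inject, Nat.sub_sub]
      split_ifs <;> simp_all [Nat.add_sub_cancel] <;> omega

/-- A sufficient criterion for a single right exchange step. -/
lemma rightStep_of (F G : Diagram) (n : ℕ)
    (hN : n + 1 < F.N)
    (hadm : F.H n + F.O n ≤ F.H (n + 1))
    (hS : G.S = F.S) (hNN : G.N = F.N)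
    (hHn : G.H n = F.H (n + 1) + F.I n - F.O n)
    (hIn : G.I n = F.I (n + 1)) (hOn : G.O n = F.O (n + 1))
    (hHn1 : G.H (n + 1) = F.H n) (hIn1 : G.I (n + 1) = F.I n) (hOn1 : G.O (n + 1) = F.O n)
    (hout : ∀ h, h ≠ n → h ≠ n + 1 → G.H h = F.H h ∧ G.I h = F.I h ∧ G.O h = F.O h) :
    RightStep F G := by
  refine ⟨n, ⟨hN, hadm⟩, ?_⟩
  have main : ∀ (u v : ℕ → ℕ) (w : ℕ),
      (u n = w) → (u (n+1) = v n) → (∀ h, h ≠ n → h ≠ n + 1 → u h = v h) →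
      u = fun h => if h = n then w else if h = n + 1 then v n else v h := by
    intro u v w h1 h2 h3
    funext h
    rcases eq_or_ne h n with rfl | hn
    · simp [h1]
    · rcases eq_or_ne h (n + 1) with rfl | hn1
      · simp [hn, h2]
      · simp [hn, hn1, h3 h hn hn1]
  refine Diagram.ext' hS hNN ?_ ?_ ?_ <;> intro h
  · have := main G.H F.H (F.H (n + 1) + F.I n - F.O n) hHn hHn1
      (fun h a b => (hout h a b).1)
    exact congrFun this h
  · have := main G.I F.I (F.I (n + 1)) hIn hIn1 (fun h a b => (hout h a b).2.1)
    exact congrFun this h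
  · have := main G.O F.O (F.O (n + 1)) hOn hOn1 (fun h a b => (hout h a b).2.2)
    exact congrFun this h

section MidEval

variable (D E : Diagram) (a ka kb : ℕ) (g : ℕ → ℕ) (m : ℕ)

lemma mid_at_mid :
    (mid D E a ka kb g m).H (a + m) = g m ∧
    (mid D E a ka kb g m).I (a + m) = D.I a ∧
    (mid D E a ka kb g m).O (a + m) = D.O a := by
  refine ⟨?_, ?_, ?_⟩ <;>
    · simp only [mid]
      rw [if_neg (by omega), if_neg (by omega)]
      simp

lemma mid_at_up {h : ℕ} (h1 : a ≤ h) (h2 : h < a + m) :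
    (mid D E a ka kb g m).H h = E.H (h - a) + ka ∧
    (mid D E a ka kb g m).I h = E.I (h - a) ∧
    (mid D E a ka kb g m).O h = E.O (h - a) := by
  refine ⟨?_, ?_, ?_⟩ <;>
    · simp only [mid]
      rw [if_neg (by omega), if_pos h2]

lemma mid_at_lo {h : ℕ} (h1 : a + m < h) (h2 : h ≤ a + E.N) :
    (mid D E a ka kb g m).H h = E.H (h - a - 1) + kb ∧
    (mid D E a ka kb g m).I h = E.I (h - a - 1) ∧
    (mid D E a ka kb g m).O h = E.O (h - a - 1) := by
  refine ⟨?_, ?_, ?_⟩ <;>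
    · simp only [mid]
      rw [if_neg (by omega), if_neg (by omega), if_neg (by omega), if_pos h2]

lemma mid_out {h : ℕ} (h1 : h ≠ a + m) (h2 : h ≠ a + m + 1) (hm : m < E.N) :
    (mid D E a ka kb g (m + 1)).H h = (mid D E a ka kb g m).H h ∧
    (mid D E a ka kb g (m + 1)).I h = (mid D E a ka kb g m).I h ∧
    (mid D E a ka kb g (m + 1)).O h = (mid D E a ka kb g m).O h := by
  refine ⟨?_, ?_, ?_⟩ <;>
    · simp only [mid]
      split_ifs <;> omega

end MidEval

/-- Exchange step used when the `E`-block lies to the left of vertex `a`. -/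
lemma mid_stepA (D E : Diagram) (a ka kb m : ℕ) (g : ℕ → ℕ)
    (haD : a < D.N) (hm : m < E.N)
    (hadm : E.H m + ka + E.O m ≤ g (m + 1))
    (hg : g (m + 1) + E.I m = g m + E.O m) (hk : ka = kb) :
    RightStep (mid D E a ka kb g (m + 1)) (mid D E a ka kb g m) := by
  have e1 : a + m - a = m := by omega
  have e2 : a + m + 1 - a - 1 = m := by omega
  obtain ⟨fH, fI, fO⟩ := mid_at_mid D E a ka kb g m
  obtain ⟨uH, uI, uO⟩ := mid_at_up D E a ka kb g (m + 1) (h := a + m) (by omega) (by omega)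
  obtain ⟨vH, vI, vO⟩ := mid_at_mid D E a ka kb g (m + 1)
  obtain ⟨lH, lI, lO⟩ := mid_at_lo D E a ka kb g m (h := a + m + 1) (by omega) (by omega)
  rw [e1] at uH uI uO
  rw [e2] at lH lI lO
  have vH' : (mid D E a ka kb g (m + 1)).H (a + m + 1) = g (m + 1) := vH
  have vI' : (mid D E a ka kb g (m + 1)).I (a + m + 1) = D.I a := vI
  have vO' : (mid D E a ka kb g (m + 1)).O (a + m + 1) = D.O a := vO
  refine rightStep_of _ _ (a + m) ?_ ?_ rfl rfl ?_ ?_ ?_ ?_ ?_ ?_ ?_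
  · show a + m + 1 < D.N + E.N
    omega
  · rw [uH, uO, vH']
    exact hadm
  · rw [fH, vH', uI, uO]
    omega
  · rw [fI, vI']
  · rw [fO, vO']
  · rw [lH, uH]
    omega
  · rw [lI, uI]
  · rw [lO, uO]
  · intro h h1 h2
    obtain ⟨o1, o2, o3⟩ := mid_out D E a ka kb g m h1 h2 hm
    exact ⟨o1.symm, o2.symm, o3.symm⟩

/-- Exchange step used when the `E`-block lies to the right of vertex `a`. -/
lemma mid_stepB (D E : Diagram) (a ka kb m : ℕ) (g : ℕ → ℕ)
    (haD : a < D.N) (hm : m < E.N)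
    (hadm : g m + D.O a ≤ E.H m + kb)
    (hk : kb + D.I a = ka + D.O a) (hg : g m = g (m + 1)) :
    RightStep (mid D E a ka kb g m) (mid D E a ka kb g (m + 1)) := by
  have e1 : a + m - a = m := by omega
  have e2 : a + m + 1 - a - 1 = m := by omega
  obtain ⟨fH, fI, fO⟩ := mid_at_mid D E a ka kb g m
  obtain ⟨uH, uI, uO⟩ := mid_at_up D E a ka kb g (m + 1) (h := a + m) (by omega) (by omega)
  obtain ⟨vH, vI, vO⟩ := mid_at_mid D E a ka kb g (m + 1)
  obtain ⟨lH, lI, lO⟩ := mid_at_lo D E a ka kb g m (h := a + m + 1) (by omega) (by omega)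
  rw [e1] at uH uI uO
  rw [e2] at lH lI lO
  have vH' : (mid D E a ka kb g (m + 1)).H (a + m + 1) = g (m + 1) := vH
  have vI' : (mid D E a ka kb g (m + 1)).I (a + m + 1) = D.I a := vI
  have vO' : (mid D E a ka kb g (m + 1)).O (a + m + 1) = D.O a := vO
  refine rightStep_of _ _ (a + m) ?_ ?_ rfl rfl ?_ ?_ ?_ ?_ ?_ ?_ ?_
  · show a + m + 1 < D.N + E.N
    omega
  · rw [fH, fO, lH]
    exact hadm
  · rw [uH, lH, fI, fO]
    omega
  · rw [uI, lI]
  · rw [uO, lO]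
  · rw [vH', fH]
    omega
  · rw [vI', fI]
  · rw [vO', fO]
  · intro h h1 h2
    exact mid_out D E a ka kb g m h1 h2 hm

/-- Chaining single exchange steps (in either direction) into an equivalence. -/
lemma chain_up (f : ℕ → Diagram) (n : ℕ)
    (h : ∀ m < n, RightStep (f m) (f (m + 1)) ∨ RightStep (f (m + 1)) (f m)) :
    Relation.EqvGen RightStep (f 0) (f n) := by
  induction n with
  | zero => exact Relation.EqvGen.refl _
  | succ n ih =>
      refine Relation.EqvGen.trans _ _ _ (ih fun m hm => h m (by omega)) ?_
      rcases h n (by omega) with hs | hs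
      · exact Relation.EqvGen.rel _ _ hs
      · exact Relation.EqvGen.symm _ _ (Relation.EqvGen.rel _ _ hs)

/-- Injections at adjacent spots are equivalent. -/
lemma inject_adj (D E : Diagram) (hEV : E.Valid) (hEC : E.Closed)
    (s t : Spot D) (hadj : SpotAdj D s t) :
    Relation.EqvGen RightStep (inject D s.1.1 s.1.2 E) (inject D t.1.1 t.1.2 E) := by
  obtain ⟨⟨a, k⟩, hs⟩ := s
  obtain ⟨⟨b, k2⟩, ht⟩ := t
  obtain ⟨hb, haD, hcase⟩ := hadj
  simp only at hb haD hcase ⊢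
  subst hb
  have hW0 : E.W 0 = 0 := by simp [Diagram.W, hEC.1]
  rcases hcase with ⟨hk2, hkH⟩ | ⟨hk2, hkH⟩
  · -- the spot passes to the left of vertex `a`
    rw [hk2]
    have key : ∀ m < E.N,
        RightStep (mid D E a k k (fun m => D.H a + (E.W m).toNat) m)
          (mid D E a k k (fun m => D.H a + (E.W m).toNat) (m + 1)) ∨
        RightStep (mid D E a k k (fun m => D.H a + (E.W m).toNat) (m + 1))
          (mid D E a k k (fun m => D.H a + (E.W m).toNat) m) := by
      intro m hm
      right
      have h1 := hEV m hm
      have h2 := W_nonneg E hEV m (by omega)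
      have h3 := W_nonneg E hEV (m + 1) (by omega)
      have h4 : E.W (m + 1) = E.W m + ((E.O m : ℤ) - (E.I m : ℤ)) := rfl
      push_cast at h1
      refine mid_stepA D E a k k m _ haD hm ?_ ?_ rfl
      · show E.H m + k + E.O m ≤ D.H a + (E.W (m + 1)).toNat
        omega
      · show D.H a + (E.W (m + 1)).toNat + E.I m = D.H a + (E.W m).toNat + E.O m
        omega
    have top : mid D E a k k (fun m => D.H a + (E.W m).toNat) E.N = inject D a k E := by
      refine mid_top D E a k k _ ?_
      show D.H a + (E.W E.N).toNat = D.H a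
      rw [hEC.2]
      rfl
    have bot : mid D E a k k (fun m => D.H a + (E.W m).toNat) 0 = inject D (a + 1) k E := by
      refine mid_bot D E a k k _ ?_
      show D.H a + (E.W 0).toNat = D.H a
      rw [hW0]
      rfl
    rw [← top, ← bot]
    exact Relation.EqvGen.symm _ _ (chain_up _ E.N key)
  · -- the spot passes to the right of vertex `a`
    have hk2' : k2 = k + D.O a - D.I a := by
      simp only [Diagram.Δ] at hk2
      omega
    subst hk2'
    have key : ∀ m < E.N,
        RightStep (mid D E a k (k + D.O a - D.I a) (fun _ => D.H a) m)
          (mid D E a k (k + D.O a - D.I a) (fun _ => D.H a) (m + 1)) ∨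
        RightStep (mid D E a k (k + D.O a - D.I a) (fun _ => D.H a) (m + 1))
          (mid D E a k (k + D.O a - D.I a) (fun _ => D.H a) m) := by
      intro m hm
      left
      refine mid_stepB D E a k (k + D.O a - D.I a) m _ haD hm ?_ ?_ rfl
      · show D.H a + D.O a ≤ E.H m + (k + D.O a - D.I a)
        omega
      · omega
    have top : mid D E a k (k + D.O a - D.I a) (fun _ => D.H a) E.N = inject D a k E :=
      mid_top D E a k (k + D.O a - D.I a) _ rfl
    have bot : mid D E a k (k + D.O a - D.I a) (fun _ => D.H a) 0 =
        inject D (a + 1) (k + D.O a - D.I a) E :=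
      mid_bot D E a k (k + D.O a - D.I a) _ rfl
    rw [← top, ← bot]
    exact Relation.EqvGen.symm _ _ (chain_up _ E.N key)

/-- injecting a valid closed diagram at two spots of the same face of a
valid closed diagram yields equivalent diagrams. -/
theorem inject_same_face_equivalent (D : Diagram) (hV : D.Valid) (hC : D.Closed)
    (a k a' k' : ℕ) (hs : ValidSpot D (a, k)) (hs' : ValidSpot D (a', k'))
    (hface : Relation.EqvGen (SpotAdj D) ⟨(a, k), hs⟩ ⟨(a', k'), hs'⟩) :
    ∀ E : Diagram, E.Valid → E.Closed →
      Relation.EqvGen RightStep (inject D a k E) (inject D a' k' E) := by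
  intro E hEV hEC
  have main : ∀ s t : Spot D, Relation.EqvGen (SpotAdj D) s t →
      Relation.EqvGen RightStep (inject D s.1.1 s.1.2 E) (inject D t.1.1 t.1.2 E) := by
    intro s t hst
    induction hst with
    | rel x y hxy => exact inject_adj D E hEV hEC x y hxy
    | refl x => exact Relation.EqvGen.refl _
    | symm x y _ ih => exact Relation.EqvGen.symm _ _ ih
    | trans x y z _ _ ih1 ih2 => exact Relation.EqvGen.trans _ _ _ ih1 ih2
  exact main ⟨(a, k), hs⟩ ⟨(a', k'), hs'⟩ hface
end
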